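/- Suppose h_1 : W → ℝ and g_1 ∈ ℝ satisfy the single-reel Bellman equation. Define the index policy which, in augmented state (w_1,...,w_N,x), selects a reel n* minimizing c(w_n,x) + h_1(e(w_n,x)) - h_1(w_n) over n in {1,...,N}. Then the Bellman error of the index policy evaluated at the random-policy bias ĥ_N(w_1,...,w_N,x) = (1/N)·Σ_n (c(w_n,x) + h_1(e(w_n,x)) + (N-1)h_1(w_n)) and gain g_1 is, at each state s = (w_1,...,w_N,x), equal to [c(w_{n*},x) + h_1(e(w_{n*},x)) - h_1(w_{n*})] - (1/N)·Σ_{n=1}^N [c(w_n,x) + h_1(e(w_n,x)) - h_1(w_n)], and this quantity is nonpositive. -/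

import Mathlib

open Finset

/-- Updated reel weight. -/
def reelE (B w x : ℕ) : ℕ := if x ≤ w then w - x else B - x

/-- Filament waste (real-valued). -/
def reelC (w x : ℕ) : ℝ := if x ≤ w then 0 else w

/-!
Under the random policy each reel is advanced with probability `1/N`, which gives the bias
`ĥ_N`. Plugging `ĥ_N` into the one-step equation of the index policy, the single-reel Bellman
equation collapses the expectation over the next component to `g₁ + Σ_n h₁(w'_n)`, where only the
chosen reel changed. What remains is the index of the chosen reel minus the average index, which is
nonpositive because the chosen reel minimizes the index.
-/

theorem reelE_lt {B w x : ℕ} (hx : 1 ≤ x) (hw : w < B) : reelE B w x < B := by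
  unfold reelE
  split <;> omega

section Averages

variable {ι : Type*} [Fintype ι]

theorem sum_apply_update_eq_sub_add [DecidableEq ι] {α M : Type*} [AddCommGroup M] (f : α → M)
    (s : ι → α) (j : ι) (a : α) :
    ∑ n, f (Function.update s j a n) = ∑ n, f (s n) - f (s j) + f a := by
  simp_rw [Function.apply_update (fun _ => f), sum_update_of_mem (mem_univ j),
    Fintype.sum_eq_add_sum_compl j (fun n => f (s n)), compl_eq_univ_sdiff]
  abel

theorem sub_average_nonpos_of_forall_le (f : ι → ℝ) {j : ι} (hj : ∀ n, f j ≤ f n) :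
    f j - (1 / Fintype.card ι) * ∑ n, f n ≤ 0 := by
  have hcard : (0 : ℝ) < Fintype.card ι := by
    have : Nonempty ι := ⟨j⟩
    exact_mod_cast Fintype.card_pos
  have hsum := card_nsmul_le_sum univ f (f j) fun n _ => hj n
  rw [card_univ, nsmul_eq_mul] at hsum
  rw [sub_nonpos, one_div, inv_mul_eq_div, le_div_iff₀ hcard]
  linarith

theorem sum_mul_average_eq_add_sum [Nonempty ι] {α : Type*} (X : Finset α) (p : α → ℝ)
    (hp : ∑ x ∈ X, p x = 1) (Q : ι → α → ℝ) (v : ι → ℝ) (g : ℝ)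
    (hQ : ∀ n, ∑ x ∈ X, p x * Q n x = v n + g) :
    ∑ x ∈ X, p x * ((1 / Fintype.card ι) * ∑ n, (Q n x + (Fintype.card ι - 1) * v n))
      = g + ∑ n, v n := by
  set N : ℝ := (Fintype.card ι : ℝ) with hN_def
  have hN : N ≠ 0 := by positivity
  calc ∑ x ∈ X, p x * ((1 / N) * ∑ n, (Q n x + (N - 1) * v n))
      = (1 / N) * ∑ n, ∑ x ∈ X, p x * (Q n x + (N - 1) * v n) := by
        simp_rw [mul_sum]
        rw [sum_comm]
        exact sum_congr rfl fun _ _ => sum_congr rfl fun _ _ => by ring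
    _ = (1 / N) * ∑ n, (g + N * v n) := by
        congr 1
        refine sum_congr rfl fun n _ => ?_
        rw [sum_congr rfl fun x _ => mul_add (p x) _ _, sum_add_distrib, hQ, ← sum_mul, hp]
        ring
    _ = g + ∑ n, v n := by
        rw [sum_add_distrib, sum_const, card_univ, nsmul_eq_mul, ← hN_def, ← mul_sum]
        field_simp

end Averages

theorem index_policy_bellman_error_general
    (B N : ℕ) (p : ℕ → ℝ)
    (hp1 : ∑ x ∈ Icc 1 B, p x = 1)
    (h1 : ℕ → ℝ) (g1 : ℝ)
    (hBellman : ∀ w < B,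
      h1 w = -g1 + ∑ x ∈ Icc 1 B, p x * (reelC w x + h1 (reelE B w x)))
    (hhat : (Fin N → ℕ) → ℕ → ℝ)
    (hhat_def : ∀ s x, hhat s x =
      (1 / (N : ℝ)) * (∑ n : Fin N, (reelC (s n) x + h1 (reelE B (s n) x) +
        ((N : ℝ) - 1) * h1 (s n))))
    (nstar : (Fin N → ℕ) → ℕ → Fin N)
    (hmin : ∀ (s : Fin N → ℕ) (x : ℕ) (n : Fin N),
      reelC (s (nstar s x)) x + h1 (reelE B (s (nstar s x)) x)
          - h1 (s (nstar s x)) ≤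
        reelC (s n) x + h1 (reelE B (s n) x) - h1 (s n)) :
    ∀ s : Fin N → ℕ, (∀ n, s n < B) → ∀ x ∈ Icc 1 B,
      (reelC (s (nstar s x)) x - g1 +
          (∑ x' ∈ Icc 1 B, p x' *
            hhat (Function.update s (nstar s x)
              (reelE B (s (nstar s x)) x)) x') - hhat s x
        = (reelC (s (nstar s x)) x + h1 (reelE B (s (nstar s x)) x)
              - h1 (s (nstar s x)))
          - (1 / (N : ℝ)) * ∑ n : Fin N,
              (reelC (s n) x + h1 (reelE B (s n) x) - h1 (s n))) ∧
      (reelC (s (nstar s x)) x - g1 +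
          (∑ x' ∈ Icc 1 B, p x' *
            hhat (Function.update s (nstar s x)
              (reelE B (s (nstar s x)) x)) x') - hhat s x ≤ 0) := by
  intro s hs x hx
  set j := nstar s x
  set s' := Function.update s j (reelE B (s j) x)
  have : Nonempty (Fin N) := ⟨j⟩
  have hN : (N : ℝ) ≠ 0 := by exact_mod_cast j.pos.ne'
  have hs' : ∀ n, s' n < B :=
    (Function.forall_update_iff s fun _ w => w < B).2
      ⟨reelE_lt (mem_Icc.1 hx).1 (hs j), fun n _ => hs n⟩
  have hnext : ∑ x' ∈ Icc 1 B, p x' * hhat s' x' = g1 + ∑ n, h1 (s' n) := by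
    have := sum_mul_average_eq_add_sum (Icc 1 B) p hp1
      (fun n x' => reelC (s' n) x' + h1 (reelE B (s' n) x')) (fun n => h1 (s' n)) g1
      fun n => by linarith [hBellman _ (hs' n)]
    simpa only [Fintype.card_fin, hhat_def] using this
  have herror : reelC (s j) x - g1 + ∑ x' ∈ Icc 1 B, p x' * hhat s' x' - hhat s x
      = (reelC (s j) x + h1 (reelE B (s j) x) - h1 (s j))
        - (1 / (N : ℝ)) * ∑ n, (reelC (s n) x + h1 (reelE B (s n) x) - h1 (s n)) := by
    rw [hnext, sum_apply_update_eq_sub_add, hhat_def, sum_sub_distrib, sum_add_distrib,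
      ← mul_sum]
    field_simp
    ring
  refine ⟨herror, herror ▸ ?_⟩
  simpa only [Fintype.card_fin] using
    sub_average_nonpos_of_forall_le (fun n => reelC (s n) x + h1 (reelE B (s n) x) - h1 (s n))
      (hmin s x)

/-- the Bellman error of the index policy, evaluated at the
random-policy bias `ĥ_N(w,x) = (1/N)·Σ_n (c(w_n,x) + h₁(e(w_n,x)) +
(N-1)·h₁(w_n))` and gain `g₁`, equals at each state the index score of the
chosen reel minus the average index score over all reels, and is
nonpositive. -/
theorem index_policy_bellman_error
    (B N : ℕ) (hB : 0 < B) (hN : 0 < N) (p : ℕ → ℝ)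
    (hp0 : ∀ x ∈ Icc 1 B, 0 ≤ p x) (hp1 : ∑ x ∈ Icc 1 B, p x = 1)
    (h1 : ℕ → ℝ) (g1 : ℝ)
    (hBellman : ∀ w < B,
      h1 w = -g1 + ∑ x ∈ Icc 1 B, p x * (reelC w x + h1 (reelE B w x)))
    (hhat : (Fin N → ℕ) → ℕ → ℝ)
    (hhat_def : ∀ s x, hhat s x =
      (1 / (N : ℝ)) * (∑ n : Fin N, (reelC (s n) x + h1 (reelE B (s n) x) +
        ((N : ℝ) - 1) * h1 (s n))))
    (nstar : (Fin N → ℕ) → ℕ → Fin N)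
    (hmin : ∀ (s : Fin N → ℕ) (x : ℕ) (n : Fin N),
      reelC (s (nstar s x)) x + h1 (reelE B (s (nstar s x)) x)
          - h1 (s (nstar s x)) ≤
        reelC (s n) x + h1 (reelE B (s n) x) - h1 (s n)) :
    ∀ s : Fin N → ℕ, (∀ n, s n < B) → ∀ x ∈ Icc 1 B,
      (reelC (s (nstar s x)) x - g1 +
          (∑ x' ∈ Icc 1 B, p x' *
            hhat (Function.update s (nstar s x)
              (reelE B (s (nstar s x)) x)) x') - hhat s x
        = (reelC (s (nstar s x)) x + h1 (reelE B (s (nstar s x)) x)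
              - h1 (s (nstar s x)))
          - (1 / (N : ℝ)) * ∑ n : Fin N,
              (reelC (s n) x + h1 (reelE B (s n) x) - h1 (s n))) ∧
      (reelC (s (nstar s x)) x - g1 +
          (∑ x' ∈ Icc 1 B, p x' *
            hhat (Function.update s (nstar s x)
              (reelE B (s (nstar s x)) x)) x') - hhat s x ≤ 0) :=
  index_policy_bellman_error_general B N p hp1 h1 g1 hBellman hhat hhat_def nstar hmin
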